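/- Let ∇ ⊂ ℝ⁴ be defined by 0 ≤ x ≤ 1, 0 ≤ y ≤ 1, 0 ≤ z ≤ 1, 0 ≤ w ≤ 1, 1+y-z-w ≥ 0, z+w-y ≥ 0, z+w-x ≥ 0, 1+x-z-w ≥ 0. For every positive integer n, the number of lattice points in n∇ equals C(n+4,4) + 5·C(n+3,4) + 5·C(n+2,4) + C(n+1,4) = (12n⁴ + 48n³ + 84n² + 72n + 24)/24. -/

import Mathlib

open Pointwise

def nabla : Set (ℝ × ℝ × ℝ × ℝ) :=
  {p : ℝ × ℝ × ℝ × ℝ |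
    0 ≤ p.1 ∧
    p.1 ≤ 1 ∧
    0 ≤ p.2.1 ∧
    p.2.1 ≤ 1 ∧
    0 ≤ p.2.2.1 ∧
    p.2.2.1 ≤ 1 ∧
    0 ≤ p.2.2.2 ∧
    p.2.2.2 ≤ 1 ∧
    0 ≤ 1 + p.2.1 - p.2.2.1 - p.2.2.2 ∧
    0 ≤ p.2.2.1 + p.2.2.2 - p.2.1 ∧
    0 ≤ p.2.2.1 + p.2.2.2 - p.1 ∧
    0 ≤ 1 + p.1 - p.2.2.1 - p.2.2.2}

/-!
An integer point `(a, b, c, d)` lies in `n∇` iff `a, b, c, d ∈ [0, n]` and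
`max a b ≤ c + d ≤ n + min a b`. Fixing `s = c + d ∈ [0, 2n]`, each of `a`, `b` and `c` ranges
independently over `[max 0 (s - n), min n s]`, an interval of `min (s + 1) (2n + 1 - s)` points,
and `d = s - c`. Hence the count is `∑ₛ min (s + 1) (2n + 1 - s) ^ 3`, i.e. the sum of the first
`n + 1` cubes plus the sum of the first `n` cubes, which is
`(((n + 1)(n + 2))² + (n(n + 1))²) / 4`; expanding the binomials gives the same polynomial.
-/

open Finset

theorem Nat.cast_choose_four {K : Type*} [Field K] [CharZero K] (a : ℕ) :
    (a.choose 4 : K) = a * (a - 1) * (a - 2) * (a - 3) / 24 := by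
  rw [Nat.cast_choose_eq_descPochhammer_div]
  simp [descPochhammer_succ_right, Nat.factorial]

theorem Finset.four_mul_sum_range_succ_pow_three (m : ℕ) :
    4 * ∑ i ∈ range m, (i + 1) ^ 3 = (m * (m + 1)) ^ 2 := by
  induction m with
  | zero => simp
  | succ k ih =>
    rw [sum_range_succ, mul_add, ih]
    ring

lemma mem_smul_nabla_iff {t : ℝ} (ht : 0 ≤ t) (p : ℝ × ℝ × ℝ × ℝ) :
    p ∈ t • nabla ↔
      0 ≤ p.1 ∧ p.1 ≤ t ∧ 0 ≤ p.2.1 ∧ p.2.1 ≤ t ∧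
      0 ≤ p.2.2.1 ∧ p.2.2.1 ≤ t ∧ 0 ≤ p.2.2.2 ∧ p.2.2.2 ≤ t ∧
      0 ≤ t + p.2.1 - p.2.2.1 - p.2.2.2 ∧ 0 ≤ p.2.2.1 + p.2.2.2 - p.2.1 ∧
      0 ≤ p.2.2.1 + p.2.2.2 - p.1 ∧ 0 ≤ t + p.1 - p.2.2.1 - p.2.2.2 := by
  obtain ⟨a, b, c, d⟩ := p
  rcases ht.eq_or_lt with rfl | ht_pos
  · rw [Set.zero_smul_set ⟨0, by simp [nabla]⟩]
    simp only [Set.mem_zero, Prod.mk_eq_zero]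
    constructor
    · rintro ⟨rfl, rfl, rfl, rfl⟩
      norm_num
    · intro h
      refine ⟨?_, ?_, ?_, ?_⟩ <;> linarith
  · rw [Set.mem_smul_set_iff_inv_smul_mem₀ ht_pos.ne']
    simp only [nabla, Set.mem_ofPred_eq, Prod.smul_mk, smul_eq_mul]
    field_simp
    simp only [zero_mul]

noncomputable def scaledNablaPoints (N : ℤ) : Finset (ℤ × ℤ × ℤ × ℤ) :=
  {v ∈ Icc 0 N ×ˢ Icc 0 N ×ˢ Icc 0 N ×ˢ Icc 0 N |
    v.2.1 ≤ v.2.2.1 + v.2.2.2 ∧ v.2.2.1 + v.2.2.2 ≤ N + v.2.1 ∧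
    v.1 ≤ v.2.2.1 + v.2.2.2 ∧ v.2.2.1 + v.2.2.2 ≤ N + v.1}

lemma coe_scaledNablaPoints (n : ℕ) :
    (scaledNablaPoints n : Set (ℤ × ℤ × ℤ × ℤ)) =
      {v | ((v.1 : ℝ), (v.2.1 : ℝ), (v.2.2.1 : ℝ), (v.2.2.2 : ℝ)) ∈ (n : ℝ) • nabla} := by
  ext ⟨a, b, c, d⟩
  simp only [scaledNablaPoints, coe_filter, mem_product, mem_Icc, Set.mem_ofPred_eq,
    mem_smul_nabla_iff n.cast_nonneg]
  norm_cast
  omega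

lemma card_filter_add_eq_card_Icc (N s : ℤ) :
    #{p ∈ Icc 0 N ×ˢ Icc 0 N | p.1 + p.2 = s} = #(Icc (max 0 (s - N)) (min N s)) := by
  refine card_nbij' Prod.fst (fun c => (c, s - c)) ?_ ?_ ?_ ?_ <;>
    simp only [Set.MapsTo, Set.LeftInvOn, coe_filter, coe_Icc, Set.mem_ofPred_eq, Set.mem_Icc,
      mem_product, mem_Icc, Prod.forall, Prod.mk.injEq, max_le_iff, le_min_iff] <;>
    grind

lemma card_scaledNablaPoints (n : ℕ) :
    #(scaledNablaPoints n) = ∑ s ∈ range (2 * n + 1), min (s + 1) (2 * n + 1 - s) ^ 3 := by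
  rw [card_eq_sum_card_fiberwise (f := fun v => (v.2.2.1 + v.2.2.2).toNat)]
  · refine sum_congr rfl fun s hs => ?_
    have hfiber : {v ∈ scaledNablaPoints n | (v.2.2.1 + v.2.2.2).toNat = s} =
        Icc (max 0 ((s : ℤ) - n)) (min (n : ℤ) s) ×ˢ Icc (max 0 ((s : ℤ) - n)) (min (n : ℤ) s) ×ˢ
          {p ∈ Icc (0 : ℤ) n ×ˢ Icc 0 (n : ℤ) | p.1 + p.2 = (s : ℤ)} := by
      ext ⟨a, b, c, d⟩
      simp only [scaledNablaPoints, mem_filter, mem_product, mem_Icc, max_le_iff, le_min_iff]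
      omega
    rw [mem_range] at hs
    rw [hfiber, card_product, card_product, card_filter_add_eq_card_Icc, Int.card_Icc, ← pow_three]
    congr 1
    omega
  · rintro ⟨a, b, c, d⟩ hv
    simp only [coe_range, Set.mem_Iio, scaledNablaPoints, coe_filter, mem_product, mem_Icc,
      Set.mem_ofPred_eq] at hv ⊢
    omega

lemma sum_range_min_pow_three (n : ℕ) :
    ∑ s ∈ range (2 * n + 1), min (s + 1) (2 * n + 1 - s) ^ 3 =
      ∑ i ∈ range (n + 1), (i + 1) ^ 3 + ∑ i ∈ range n, (i + 1) ^ 3 := by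
  rw [show 2 * n + 1 = (n + 1) + n by ring, sum_range_add, ← sum_range_reflect _ n]
  congr 1 <;> refine sum_congr rfl fun i hi => ?_ <;> rw [mem_range] at hi <;> congr 1 <;> omega

lemma four_mul_card_scaledNablaPoints (n : ℕ) :
    4 * #(scaledNablaPoints n) = ((n + 1) * (n + 2)) ^ 2 + (n * (n + 1)) ^ 2 := by
  rw [card_scaledNablaPoints, sum_range_min_pow_three, mul_add,
    four_mul_sum_range_succ_pow_three, four_mul_sum_range_succ_pow_three]

theorem stmt16_general (n : ℕ) :
    {v : ℤ × ℤ × ℤ × ℤ | (((v.1 : ℝ), (v.2.1 : ℝ), (v.2.2.1 : ℝ), (v.2.2.2 : ℝ)) : ℝ × ℝ × ℝ × ℝ) ∈ (n : ℝ) • nabla}.ncard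
        = Nat.choose (n + 4) 4 + 5 * Nat.choose (n + 3) 4 + 5 * Nat.choose (n + 2) 4 + Nat.choose (n + 1) 4 ∧
      ((Nat.choose (n + 4) 4 + 5 * Nat.choose (n + 3) 4 + 5 * Nat.choose (n + 2) 4 + Nat.choose (n + 1) 4 : ℚ))
        = (12 * (n : ℚ) ^ 4 + 48 * (n : ℚ) ^ 3 + 84 * (n : ℚ) ^ 2 + 72 * (n : ℚ) ^ 1 + 24) / 24 := by
  refine ⟨?_, by push_cast [Nat.cast_choose_four]; ring⟩
  rw [← coe_scaledNablaPoints, Set.ncard_coe_finset]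
  have h4 : (4 * #(scaledNablaPoints n) : ℚ) = ((n + 1) * (n + 2)) ^ 2 + (n * (n + 1)) ^ 2 := by
    exact_mod_cast four_mul_card_scaledNablaPoints n
  qify
  push_cast [Nat.cast_choose_four]
  linear_combination h4 / 4

theorem stmt16 (n : ℕ) (hn : 0 < n) :
    {v : ℤ × ℤ × ℤ × ℤ | (((v.1 : ℝ), (v.2.1 : ℝ), (v.2.2.1 : ℝ), (v.2.2.2 : ℝ)) : ℝ × ℝ × ℝ × ℝ) ∈ (n : ℝ) • nabla}.ncard
        = Nat.choose (n + 4) 4 + 5 * Nat.choose (n + 3) 4 + 5 * Nat.choose (n + 2) 4 + Nat.choose (n + 1) 4 ∧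
      ((Nat.choose (n + 4) 4 + 5 * Nat.choose (n + 3) 4 + 5 * Nat.choose (n + 2) 4 + Nat.choose (n + 1) 4 : ℚ))
        = (12 * (n : ℚ) ^ 4 + 48 * (n : ℚ) ^ 3 + 84 * (n : ℚ) ^ 2 + 72 * (n : ℚ) ^ 1 + 24) / 24 :=
  stmt16_general n
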